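/- Under the main constraint, if I and I' differ in slot j and agree in slot k, then (c_I c_{I'} − c_{I'_j} c_{I_j}) e^j_{i_jᶜ i_j} = (c_I c_{I'_{jk}} − c_{I'_j} c_{I_k}) e^k_{i_kᶜ i_k}. -/

import Mathlib

open scoped BigOperators

/-- Complement the bit in slot `j` of the multi-index `I`. -/
def bflip {n : ℕ} (I : Fin n → Fin 2) (j : Fin n) : Fin n → Fin 2 :=
  Function.update I j (1 - I j)

/-- The main constraint on coefficients c_I and environment vectors e^j_{ir}:
c_I e^j_{i_j i_j} + c_{I_j} e^j_{i_jᶜ i_j} = c_I e^k_{i_k i_k} + c_{I_k} e^k_{i_kᶜ i_k}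
for every multi-index I and all qubits j, k. -/
def MainConstraint {n : ℕ} {V : Type*} [AddCommGroup V] [Module ℂ V]
    (c : (Fin n → Fin 2) → ℂ) (e : Fin n → Fin 2 → Fin 2 → V) : Prop :=
  ∀ (I : Fin n → Fin 2) (j k : Fin n),
    c I • e j (I j) (I j) + c (bflip I j) • e j (1 - I j) (I j)
      = c I • e k (I k) (I k) + c (bflip I k) • e k (1 - I k) (I k)

/-! `I` and `I'_j` agree in slots `j` and `k`, so the main constraint at these two
multi-indices involves the same four vectors `e^j_{i_j i_j}`, `e^j_{i_jᶜ i_j}`, `e^k_{i_k i_k}`,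
`e^k_{i_kᶜ i_k}`. Cross-multiplying the two constraints by `c_{I'_j}` and `c_I` cancels the
diagonal vectors, and `(I'_j)_j = I'`. -/

theorem Fin.two_eq_one_sub_of_ne {a b : Fin 2} (h : a ≠ b) : a = 1 - b := by
  revert a b; decide

section bflip

variable {n : ℕ} (I : Fin n → Fin 2) {j k : Fin n}

theorem bflip_apply_self : bflip I j j = 1 - I j :=
  Function.update_self _ _ _

theorem bflip_apply_of_ne (h : k ≠ j) : bflip I j k = I k :=
  Function.update_of_ne h _ _

theorem bflip_bflip : bflip (bflip I j) j = I := by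
  simp only [bflip, Function.update_idem, Function.update_self, sub_sub_cancel,
    Function.update_eq_self]

end bflip

theorem MainConstraint.cross_eq_of_agree {n : ℕ} {V : Type*} [AddCommGroup V] [Module ℂ V]
    {c : (Fin n → Fin 2) → ℂ} {e : Fin n → Fin 2 → Fin 2 → V} (hmc : MainConstraint c e)
    {J K : Fin n → Fin 2} {j k : Fin n} (hj : K j = J j) (hk : K k = J k) :
    (c J * c (bflip K j) - c K * c (bflip J j)) • e j (1 - J j) (J j)
      = (c J * c (bflip K k) - c K * c (bflip J k)) • e k (1 - J k) (J k) := by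
  have hJ := hmc J j k
  have hK := hmc K j k
  rw [hj, hk] at hK
  linear_combination (norm := module) c J • hK - c K • hJ

/-- Under the main constraint, if I and I' differ in slot j and agree in slot k,
then (c_I c_{I'} − c_{I'_j} c_{I_j}) e^j_{i_jᶜ i_j}
   = (c_I c_{I'_{jk}} − c_{I'_j} c_{I_k}) e^k_{i_kᶜ i_k}. -/
theorem stmt12 {n : ℕ} {V : Type*} [AddCommGroup V] [Module ℂ V]
    (c : (Fin n → Fin 2) → ℂ) (e : Fin n → Fin 2 → Fin 2 → V)
    (hmc : MainConstraint c e)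
    (I I' : Fin n → Fin 2) (j k : Fin n)
    (hdiff : I' j ≠ I j) (hagree : I' k = I k) :
    (c I * c I' - c (bflip I' j) * c (bflip I j)) • e j (1 - I j) (I j)
      = (c I * c (bflip (bflip I' j) k) - c (bflip I' j) * c (bflip I k))
          • e k (1 - I k) (I k) := by
  have hkj : k ≠ j := fun h => hdiff (h ▸ hagree)
  have hj : bflip I' j j = I j := by
    rw [bflip_apply_self, Fin.two_eq_one_sub_of_ne hdiff, sub_sub_cancel]
  have hk : bflip I' j k = I k := by rw [bflip_apply_of_ne _ hkj, hagree]
  simpa only [bflip_bflip] using hmc.cross_eq_of_agree hj hk
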